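/- For every integer $d \ge 1$, the identity $\sum_{t+k+m+n=d,\ t,k,m,n\ge 0} \dfrac{v^{t^2 - 2dt + t + 2nt + \binom{n+1}{2} - 2km - 2m}}{[n]!\,[2k]^{!!}\,[2m]^{!!}} (v - v^{-1})^t = \dfrac{2 v^d \prod_{j=1}^{d-1}(v^j + v^{-j})}{[d]!}$ holds in $\mathbb{Q}(v)$. -/
import Mathlib


noncomputable section

abbrev K : Type := RatFunc ℚ

/-- The indeterminate `v` in `ℚ(v)`. -/
def v : K := RatFunc.X

/-- Quantum integer `[m] = (v^m - v^{-m})/(v - v^{-1})`. -/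
def qint (m : ℤ) : K := (v ^ m - v ^ (-m)) / (v - v⁻¹)

/-- Quantum factorial `[r]! = ∏_{i=1}^r [i]`. -/
def qfact (r : ℕ) : K := ∏ i ∈ Finset.range r, qint ((i : ℤ) + 1)

/-- Quantum double factorial `[2r]!! = ∏_{i=1}^r [2i]`. -/
def qdfact (r : ℕ) : K := ∏ i ∈ Finset.range r, qint (2 * ((i : ℤ) + 1))

/-- Balanced Gaussian binomial coefficient `[m][m-1]⋯[m-r+1]/[r]!`. -/
def qbinom (m : ℤ) (r : ℕ) : K := (∏ i ∈ Finset.range r, qint (m - (i : ℤ))) / qfact r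

/-- Gaussian binomial with integer lower index, vanishing for negative lower index. -/
def qbinomZ (m r : ℤ) : K := if 0 ≤ r then qbinom m r.toNat else 0

lemma hv0 : v ≠ 0 := RatFunc.X_ne_zero
lemma hXpow (n : ℕ) (hn : 1 ≤ n) : (RatFunc.X : K)^n ≠ 1 := by
  intro h
  have h2 : (algebraMap (Polynomial ℚ) K) (Polynomial.X ^ n) = (algebraMap (Polynomial ℚ) K) 1 := by
    simpa using h
  have h3 : (Polynomial.X : Polynomial ℚ) ^ n = 1 := RatFunc.algebraMap_injective ℚ h2
  have := congrArg Polynomial.natDegree h3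
  simp [Polynomial.natDegree_X_pow] at this
  omega
lemma hzpow (n : ℤ) (hn : n ≠ 0) : v ^ n ≠ 1 := by
  rcases lt_or_gt_of_ne hn with h | h
  · intro he
    have : v ^ (-n) = 1 := by
      rw [zpow_neg, he, inv_one]
    have hn' : (0:ℤ) < -n := by omega
    obtain ⟨m, hm⟩ : ∃ m : ℕ, -n = (m:ℤ) := ⟨(-n).toNat, by omega⟩
    rw [hm, zpow_natCast] at this
    exact hXpow m (by omega) this
  · intro he
    obtain ⟨m, rfl⟩ : ∃ m : ℕ, n = (m:ℤ) := ⟨n.toNat, by omega⟩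
    rw [zpow_natCast] at he
    exact hXpow m (by exact_mod_cast h) he
lemma hvv : v - v⁻¹ ≠ 0 := by
  intro h
  have h1 : v = v⁻¹ := by linear_combination h
  have : v ^ (2:ℤ) = 1 := by
    have := congrArg (· * v) h1
    simp [inv_mul_cancel₀ hv0] at this
    calc v ^ (2:ℤ) = v * v := by rw [zpow_two]
    _ = 1 := this
  exact hzpow 2 (by norm_num) this
lemma vdiff (m : ℤ) (hm : m ≠ 0) : v ^ m - v ^ (-m) ≠ 0 := by
  intro h
  have h1 : v ^ m = v ^ (-m) := by linear_combination h
  have : v ^ (2*m) = 1 := by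
    rw [two_mul, zpow_add₀ hv0]
    nth_rewrite 1 [h1]
    rw [zpow_neg, inv_mul_cancel₀ (zpow_ne_zero _ hv0)]
  exact hzpow _ (by omega) this

lemma qint_ne (m : ℤ) (hm : m ≠ 0) : qint m ≠ 0 :=
  div_ne_zero (vdiff m hm) hvv
lemma qfact_ne (r : ℕ) : qfact r ≠ 0 :=
  Finset.prod_ne_zero_iff.mpr fun i _ => qint_ne _ (by omega)
lemma qdfact_ne (r : ℕ) : qdfact r ≠ 0 :=
  Finset.prod_ne_zero_iff.mpr fun i _ => qint_ne _ (by omega)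
lemma qint_zero : qint 0 = 0 := by simp [qint]
lemma qfact_succ (r : ℕ) : qfact (r+1) = qfact r * qint (r+1) := by
  rw [qfact, Finset.prod_range_succ]; norm_num [qfact]
lemma qdfact_succ (r : ℕ) : qdfact (r+1) = qdfact r * qint (2*(r+1)) := by
  rw [qdfact, Finset.prod_range_succ]; norm_num [qdfact]

lemma pascal (a b : ℤ) : qint (a+b) = v^b * qint a + v^(-a) * qint b := by
  have h : v^(a+b) - v^(-(a+b)) = v^b*(v^a - v^(-a)) + v^(-a)*(v^b - v^(-b)) := by
    simp only [zpow_add₀ hv0, neg_add, zpow_neg]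
    ring
  rw [qint, qint, qint, h, add_div, mul_div_assoc, mul_div_assoc]

-- [2m] = [m] (v^m + v^{-m})
lemma qint_double (m : ℤ) : qint (2*m) = qint m * (v^m + v^(-m)) := by
  rw [qint, qint, div_mul_eq_mul_div]
  congr 1
  rw [two_mul, zpow_add₀ hv0, neg_add, zpow_add₀ hv0, zpow_neg]
  ring

lemma vmul (a b : ℤ) : v^a * v^b = v^(a+b) := (zpow_add₀ hv0 a b).symm

lemma helper (a b : ℤ) (Q D E : K) (hQ : Q ≠ 0) (hD : D ≠ 0) (hE : E ≠ 0) :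
    v^a * Q * (v^b / (D * Q * E)) = v^(a+b) / (D * E) := by
  rw [← vmul]; field_simp

/-- the summand of Lemma A -/
def wA (s m : ℕ) : K := v ^ (-2*(m:ℤ)*((s:ℤ)-m) - 2*m) / (qdfact (s-m) * qdfact m)

lemma reversal (s : ℕ) :
    ∑ m ∈ Finset.range (s+1), v^(-4*((s:ℤ)-m)) * wA s m
      = v^(-2*(s:ℤ)) * ∑ m ∈ Finset.range (s+1), wA s m := by
  rw [Finset.mul_sum, ← Finset.sum_range_reflect]
  apply Finset.sum_congr rfl
  intro m hm
  have hms : m ≤ s := by simpa [Nat.lt_succ_iff] using hm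
  have hc : ((s - m : ℕ) : ℤ) = (s:ℤ) - m := by omega
  simp only [Nat.add_sub_cancel]
  rw [wA, wA, Nat.sub_sub_self hms, hc]
  rw [mul_div_assoc', mul_div_assoc', vmul, vmul, mul_comm (qdfact m)]
  congr 1
  congr 1
  ring

lemma lemA (s : ℕ) :
    ∑ m ∈ Finset.range (s+1), wA s m = v ^ (-((s*(s+1)/2 : ℕ) : ℤ)) / qfact s := by
  induction s with
  | zero => simp [wA, qfact, qdfact]
  | succ s ih =>
    have key : qint (2*((s:ℤ)+1)) * ∑ m ∈ Finset.range (s+2), wA (s+1) m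
        = (1 + v^(-2*(s:ℤ)-2)) * ∑ m ∈ Finset.range (s+1), wA s m := by
      rw [Finset.mul_sum]
      have split : ∀ m ∈ Finset.range (s+2),
          qint (2*((s:ℤ)+1)) * wA (s+1) m
          = v^(2*(m:ℤ)) * qint (2*((s:ℤ)+1-m)) * wA (s+1) m
            + v^(-2*((s:ℤ)+1-m)) * qint (2*m) * wA (s+1) m := by
        intro m _
        have h2 : (2*((s:ℤ)+1)) = 2*((s:ℤ)+1-m) + 2*m := by ring
        rw [h2, pascal]
        ring_nf
      rw [Finset.sum_congr rfl split, Finset.sum_add_distrib]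
      have sum1 : ∑ m ∈ Finset.range (s+2), v^(2*(m:ℤ)) * qint (2*((s:ℤ)+1-m)) * wA (s+1) m
          = ∑ m ∈ Finset.range (s+1), wA s m := by
        rw [Finset.sum_range_succ]
        have hz : (2:ℤ)*((s:ℤ)+1-((s+1:ℕ):ℤ)) = 0 := by push_cast; ring
        rw [hz, qint_zero, mul_zero, zero_mul, add_zero]
        apply Finset.sum_congr rfl
        intro m hm
        have hms : m ≤ s := by simpa [Nat.lt_succ_iff] using hm
        rw [wA, wA]
        have h1 : s + 1 - m = (s - m) + 1 := by omega
        rw [h1, qdfact_succ]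
        have h2 : (2*(((s-m:ℕ):ℤ)+1)) = 2*((s:ℤ)+1-m) := by push_cast [Nat.cast_sub hms]; ring
        rw [h2]
        have hne : qint (2*((s:ℤ)+1-m)) ≠ 0 := qint_ne _ (by omega)
        rw [helper _ _ _ _ _ hne (qdfact_ne _) (qdfact_ne _)]
        congr 2
        push_cast
        ring
      have sum2 : ∑ m ∈ Finset.range (s+2), v^(-2*((s:ℤ)+1-m)) * qint (2*(m:ℤ)) * wA (s+1) m
          = v^(-2*(s:ℤ)-2) * ∑ m ∈ Finset.range (s+1), wA s m := by
        rw [Finset.sum_range_succ']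
        have hz : v^(-2*((s:ℤ)+1-((0:ℕ):ℤ))) * qint (2*((0:ℕ):ℤ)) * wA (s+1) 0 = 0 := by
          norm_num [qint_zero]
        rw [hz, add_zero]
        have step : ∀ m ∈ Finset.range (s+1),
            v^(-2*((s:ℤ)+1-((m+1:ℕ):ℤ))) * qint (2*((m+1:ℕ):ℤ)) * wA (s+1) (m+1)
            = v^(-2:ℤ) * (v^(-4*((s:ℤ)-m)) * wA s m) := by
          intro m hm
          have hms : m ≤ s := by simpa [Nat.lt_succ_iff] using hm
          rw [wA, wA]
          have h1 : s + 1 - (m+1) = s - m := by omega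
          rw [h1, qdfact_succ]
          have hc2 : (2*(((m:ℕ):ℤ)+1)) = 2*(((m+1:ℕ)):ℤ) := by push_cast; ring
          rw [hc2]
          have hne : qint (2*(((m+1:ℕ)):ℤ)) ≠ 0 := qint_ne _ (by push_cast; omega)
          rw [show qdfact (s-m) * (qdfact m * qint (2*(((m+1:ℕ)):ℤ)))
              = qdfact (s-m) * qint (2*(((m+1:ℕ)):ℤ)) * qdfact m from by ring]
          rw [helper _ _ _ _ _ hne (qdfact_ne _) (qdfact_ne _)]
          rw [mul_div_assoc', mul_div_assoc', vmul, vmul]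
          congr 2
          push_cast [Nat.cast_sub hms]
          ring
        rw [Finset.sum_congr rfl step, ← Finset.mul_sum, reversal, ← mul_assoc, vmul]
        congr 1
        congr 1
        ring
      rw [sum1, sum2]
      ring
    have hq : qint (2*((s:ℤ)+1)) ≠ 0 := qint_ne _ (by omega)
    have hσ : ((s+1)*(s+1+1)/2 : ℕ) = (s*(s+1)/2 : ℕ) + (s+1) := by
      have e1 : (s+1)*(s+1+1) = s*(s+1) + 2*(s+1) := by ring
      obtain ⟨k, hk⟩ := Nat.even_mul_succ_self s
      rw [e1, hk]
      omega
    have expand : v ^ (-(((s+1)*(s+1+1)/2 : ℕ) : ℤ)) = v ^ (-((s*(s+1)/2 : ℕ):ℤ)) * v^(-(s:ℤ)-1) := by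
      rw [vmul]
      congr 1
      rw [hσ]
      push_cast
      ring
    have goal2 : (1 + v^(-2*(s:ℤ)-2)) * (v ^ (-((s*(s+1)/2 : ℕ) : ℤ)) / qfact s)
        = qint (2*((s:ℤ)+1)) * (v ^ (-(((s+1)*(s+1+1)/2 : ℕ) : ℤ)) / qfact (s+1)) := by
      rw [mul_div_assoc', mul_div_assoc', div_eq_div_iff (qfact_ne s) (qfact_ne (s+1))]
      rw [qfact_succ, expand, qint_double]
      have hmono : (1 + v^(-2*(s:ℤ)-2)) = (v^((s:ℤ)+1)+v^(-((s:ℤ)+1))) * v^(-(s:ℤ)-1) := by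
        rw [add_mul, vmul, vmul, show ((s:ℤ)+1) + (-(s:ℤ)-1) = 0 from by ring,
          show (-((s:ℤ)+1)) + (-(s:ℤ)-1) = -2*(s:ℤ)-2 from by ring, zpow_zero]
      rw [hmono]
      ring
    have hS := key
    rw [ih, goal2] at hS
    exact mul_left_cancel₀ hq hS

/-- the summand of Lemma B -/
def wB (r t n : ℕ) : K := v^((n:ℤ)*((r:ℤ)+2*t+1)) / (qfact n * qfact (r-n))

lemma lemB (r : ℕ) : ∀ t : ℕ, ∑ n ∈ Finset.range (r+1), wB r t n
    = (∏ j ∈ Finset.Icc (t+1) (t+r), (1+v^(2*(j:ℤ)))) / qfact r := by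
  induction r with
  | zero => intro t; simp [wB, qfact]
  | succ r ih =>
    intro t
    have key : qint ((r:ℤ)+1) * ∑ n ∈ Finset.range (r+2), wB (r+1) t n
        = (1 + v^(2*(t:ℤ)+2)) * ∑ n ∈ Finset.range (r+1), wB r (t+1) n := by
      rw [Finset.mul_sum]
      have split : ∀ n ∈ Finset.range (r+2),
          qint ((r:ℤ)+1) * wB (r+1) t n
          = v^((n:ℤ)) * qint ((r:ℤ)+1-n) * wB (r+1) t n
            + v^(-((r:ℤ)+1-n)) * qint (n:ℤ) * wB (r+1) t n := by
        intro n _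
        have h2 : ((r:ℤ)+1) = ((r:ℤ)+1-n) + n := by ring
        rw [h2, pascal]
        ring_nf
      rw [Finset.sum_congr rfl split, Finset.sum_add_distrib]
      have sum1 : ∑ n ∈ Finset.range (r+2), v^((n:ℤ)) * qint ((r:ℤ)+1-n) * wB (r+1) t n
          = ∑ n ∈ Finset.range (r+1), wB r (t+1) n := by
        rw [Finset.sum_range_succ]
        have hz : ((r:ℤ)+1-((r+1:ℕ):ℤ)) = 0 := by push_cast; ring
        rw [hz, qint_zero, mul_zero, zero_mul, add_zero]
        apply Finset.sum_congr rfl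
        intro n hn
        have hns : n ≤ r := by simpa [Nat.lt_succ_iff] using hn
        rw [wB, wB]
        have h1 : r + 1 - n = (r - n) + 1 := by omega
        rw [h1, qfact_succ]
        have h2 : ((((r-n:ℕ):ℤ))+1) = ((r:ℤ)+1-n) := by push_cast [Nat.cast_sub hns]; ring
        rw [h2]
        have hne : qint ((r:ℤ)+1-n) ≠ 0 := qint_ne _ (by omega)
        rw [show qfact n * (qfact (r-n) * qint ((r:ℤ)+1-n))
            = qfact n * qint ((r:ℤ)+1-n) * qfact (r-n) from by ring]
        rw [helper _ _ _ _ _ hne (qfact_ne _) (qfact_ne _)]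
        congr 2
        push_cast
        ring
      have sum2 : ∑ n ∈ Finset.range (r+2), v^(-((r:ℤ)+1-n)) * qint (n:ℤ) * wB (r+1) t n
          = v^(2*(t:ℤ)+2) * ∑ n ∈ Finset.range (r+1), wB r (t+1) n := by
        rw [Finset.sum_range_succ']
        have hz : v^(-((r:ℤ)+1-((0:ℕ):ℤ))) * qint ((0:ℕ):ℤ) * wB (r+1) t 0 = 0 := by
          norm_num [qint_zero]
        rw [hz, add_zero, Finset.mul_sum]
        apply Finset.sum_congr rfl
        intro n hn
        have hns : n ≤ r := by simpa [Nat.lt_succ_iff] using hn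
        rw [wB, wB]
        have h1 : r + 1 - (n+1) = r - n := by omega
        rw [h1, qfact_succ]
        have h2 : (((n:ℕ):ℤ)+1) = (((n+1:ℕ)):ℤ) := by push_cast; ring
        rw [h2]
        have hne : qint (((n+1:ℕ)):ℤ) ≠ 0 := qint_ne _ (by push_cast; omega)
        rw [show qfact n * qint (((n+1:ℕ)):ℤ) * qfact (r-n)
            = qfact n * qint (((n+1:ℕ)):ℤ) * qfact (r-n) from rfl]
        rw [helper _ _ _ _ _ hne (qfact_ne _) (qfact_ne _)]
        rw [mul_div_assoc', vmul]
        congr 2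
        push_cast
        ring
      rw [sum1, sum2]
      ring
    have hq : qint ((r:ℤ)+1) ≠ 0 := qint_ne _ (by omega)
    have peel : ∏ j ∈ Finset.Icc (t+1) (t+(r+1)), (1+v^(2*(j:ℤ)))
        = (1+v^(2*(t:ℤ)+2)) * ∏ j ∈ Finset.Icc (t+2) ((t+1)+r), (1+v^(2*(j:ℤ))) := by
      rw [show t+(r+1) = (t+1)+r from by ring, ← Finset.Ico_add_one_right_eq_Icc,
        Finset.prod_eq_prod_Ico_succ_bot (by omega), Finset.Ico_add_one_right_eq_Icc]
      have hc : (2 * ((t+1:ℕ):ℤ)) = 2*(t:ℤ)+2 := by push_cast; ring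
      rw [hc]
    have goal2 : (1 + v^(2*(t:ℤ)+2)) * ((∏ j ∈ Finset.Icc ((t+1)+1) ((t+1)+r), (1+v^(2*(j:ℤ)))) / qfact r)
        = qint ((r:ℤ)+1) * ((∏ j ∈ Finset.Icc (t+1) (t+(r+1)), (1+v^(2*(j:ℤ)))) / qfact (r+1)) := by
      rw [peel, mul_div_assoc', mul_div_assoc', div_eq_div_iff (qfact_ne r) (qfact_ne (r+1))]
      rw [qfact_succ]
      rw [show (t+1)+1 = t+2 from rfl]
      ring
    have hS := key
    rw [ih (t+1), goal2] at hS
    exact mul_left_cancel₀ hq hS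

/-- product ∏_{j=d-T+1}^{d} (v^j - v^{-j}) -/
def Mneg (d T : ℕ) : K := ∏ i ∈ Finset.range T, (v^((d:ℤ)-i) - v^(-((d:ℤ)-i)))

/-- summand of the final t-sum (times qfact d) -/
def aT (d t : ℕ) : K :=
  v^(-(t:ℤ)*((d:ℤ)-1)) * Mneg d t * ∏ j ∈ Finset.Icc (t+1) d, (v^(j:ℤ) + v^(-(j:ℤ)))

def G (d T : ℕ) : K :=
  v^((1-(T:ℤ))*d) * Mneg d T * ∏ j ∈ Finset.Icc T (d-1), (v^(j:ℤ) + v^(-(j:ℤ)))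

lemma gstep (d T : ℕ) (h1 : 1 ≤ T) (h2 : T ≤ d-1) (hd : 1 ≤ d) :
    G d T = aT d T + G d (T+1) := by
  have hTd : T + 1 ≤ d := by omega
  rw [G, aT, G]
  -- peel bottom of Icc T (d-1)
  rw [show Finset.Icc T (d-1) = Finset.Ico T ((d-1)+1) from (Finset.Ico_add_one_right_eq_Icc _ _).symm,
    Finset.prod_eq_prod_Ico_succ_bot (by omega), Finset.Ico_add_one_right_eq_Icc]
  -- peel top of Icc (T+1) d
  rw [show (Finset.Icc (T+1) d) = Finset.Icc (T+1) ((d-1)+1) from by rw [Nat.sub_add_cancel hd],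
    Finset.prod_Icc_succ_top (by omega)]
  rw [show (d-1)+1 = d from Nat.sub_add_cancel hd]
  -- Mneg recursion
  rw [show Mneg d (T+1) = Mneg d T * (v^((d:ℤ)-T) - v^(-((d:ℤ)-T))) from Finset.prod_range_succ _ _]
  have hmono : v^((1-(T:ℤ))*d) * (v^(T:ℤ) + v^(-(T:ℤ)))
      = v^(-(T:ℤ)*((d:ℤ)-1)) * (v^(d:ℤ) + v^(-(d:ℤ)))
        + v^((1-((T:ℤ)+1))*d) * (v^((d:ℤ)-T) - v^(-((d:ℤ)-T))) := by
    have e1 : v^((1-(T:ℤ))*d) * v^(T:ℤ) = v^(-(T:ℤ)*((d:ℤ)-1)) * v^(d:ℤ) := by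
      rw [vmul, vmul]; congr 1; ring
    have e2 : v^((1-(T:ℤ))*d) * v^(-(T:ℤ)) = v^((1-((T:ℤ)+1))*d) * v^((d:ℤ)-T) := by
      rw [vmul, vmul]; congr 1; ring
    have e3 : v^(-(T:ℤ)*((d:ℤ)-1)) * v^(-(d:ℤ)) = v^((1-((T:ℤ)+1))*d) * v^(-((d:ℤ)-T)) := by
      rw [vmul, vmul]; congr 1; ring
    linear_combination e1 + e2 - e3
  push_cast
  linear_combination (Mneg d T * ∏ j ∈ Finset.Icc (T+1) (d-1), (v^(j:ℤ) + v^(-(j:ℤ)))) * hmono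

lemma tailC (d : ℕ) (hd : 1 ≤ d) : ∀ L, L ≤ d-1 →
    ∑ i ∈ Finset.range (L+1), aT d (d-i) = G d (d-L) := by
  intro L
  induction L with
  | zero =>
    intro _
    rw [Finset.sum_range_one, Nat.sub_zero, aT, G]
    rw [Finset.Icc_eq_empty (by omega), Finset.Icc_eq_empty (by omega)]
    congr 2
    congr 1
    push_cast
    ring
  | succ L ih =>
    intro hL
    rw [Finset.sum_range_succ, ih (by omega)]
    have h1 : d - L = (d - (L+1)) + 1 := by omega
    rw [h1, gstep d (d-(L+1)) (by omega) (by omega) hd]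
    ring

lemma lemC (d : ℕ) (hd : 1 ≤ d) :
    ∑ t ∈ Finset.range (d+1), aT d t
      = 2 * v^(d:ℤ) * ∏ j ∈ Finset.Icc 1 (d-1), (v^(j:ℤ) + v^(-(j:ℤ))) := by
  rw [Finset.sum_range_succ']
  have hrev : ∑ i ∈ Finset.range d, aT d (i+1) = ∑ i ∈ Finset.range d, aT d (d-i) := by
    rw [← Finset.sum_range_reflect]
    apply Finset.sum_congr rfl
    intro i hi
    have : d - 1 - i + 1 = d - i := by
      have := Finset.mem_range.mp hi
      omega
    rw [this]
  rw [hrev]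
  have htail := tailC d hd (d-1) (le_refl _)
  rw [show (d-1)+1 = d from Nat.sub_add_cancel hd] at htail
  rw [htail, show d - (d-1) = 1 from by omega]
  -- aT d 0 = ∏_{Icc 1 d} = (v^d+v^{-d}) * ∏_{Icc 1 (d-1)}
  have ha0 : aT d 0 = (v^(d:ℤ) + v^(-(d:ℤ))) * ∏ j ∈ Finset.Icc 1 (d-1), (v^(j:ℤ) + v^(-(j:ℤ))) := by
    rw [aT, Mneg]
    rw [show (Finset.Icc (0+1) d) = Finset.Icc 1 ((d-1)+1) from by rw [Nat.sub_add_cancel hd],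
      Finset.prod_Icc_succ_top (by omega)]
    rw [show (d-1)+1 = d from Nat.sub_add_cancel hd]
    simp [mul_comm]
  have hg1 : G d 1 = (v^(d:ℤ) - v^(-(d:ℤ))) * ∏ j ∈ Finset.Icc 1 (d-1), (v^(j:ℤ) + v^(-(j:ℤ))) := by
    rw [G, Mneg]
    rw [Finset.prod_range_one]
    norm_num [mul_comm]
  rw [ha0, hg1]
  ring

lemma triangle (N : ℕ) (f : ℕ → ℕ → K) :
    ∑ k ∈ Finset.range N, ∑ m ∈ Finset.range (N - k), f k m
      = ∑ s ∈ Finset.range N, ∑ m ∈ Finset.range (s+1), f (s-m) m := by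
  induction N with
  | zero => simp
  | succ N ih =>
    have h1 : ∑ k ∈ Finset.range (N+1), ∑ m ∈ Finset.range (N+1-k), f k m
        = ∑ k ∈ Finset.range (N+1), (∑ m ∈ Finset.range (N-k), f k m + f k (N-k)) := by
      apply Finset.sum_congr rfl
      intro k hk
      have hkN : k ≤ N := by simpa [Nat.lt_succ_iff] using hk
      rw [show N+1-k = (N-k)+1 from by omega, Finset.sum_range_succ]
    rw [h1, Finset.sum_add_distrib]
    have h2 : ∑ k ∈ Finset.range (N+1), ∑ m ∈ Finset.range (N-k), f k m
        = ∑ k ∈ Finset.range N, ∑ m ∈ Finset.range (N-k), f k m := by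
      rw [Finset.sum_range_succ]
      simp
    have h3 : ∑ k ∈ Finset.range (N+1), f k (N-k) = ∑ m ∈ Finset.range (N+1), f (N-m) m := by
      rw [← Finset.sum_range_reflect]
      apply Finset.sum_congr rfl
      intro i hi
      have hiN : i ≤ N := by simpa [Nat.lt_succ_iff] using hi
      rw [show N+1-1-i = N-i from by omega, Nat.sub_sub_self hiN]
    rw [h2, h3, ih, Finset.sum_range_succ (fun s => ∑ m ∈ Finset.range (s+1), f (s-m) m)]

lemma gauss (n : ℕ) : ∑ j ∈ Finset.Icc 1 n, j = n*(n+1)/2 := by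
  induction n with
  | zero => simp
  | succ n ih =>
    rw [Finset.sum_Icc_succ_top (by omega), ih]
    obtain ⟨k, hk⟩ := Nat.even_mul_succ_self n
    have e1 : (n+1)*(n+1+1) = n*(n+1) + 2*(n+1) := by ring
    rw [e1, hk]
    omega

lemma gauss_split (t d : ℕ) (h : t ≤ d) :
    ∑ j ∈ Finset.Icc (t+1) d, j = d*(d+1)/2 - t*(t+1)/2 := by
  have h1 : (∑ j ∈ Finset.Ico 1 (t+1), j) + (∑ j ∈ Finset.Ico (t+1) (d+1), j)
      = ∑ j ∈ Finset.Ico 1 (d+1), j := Finset.sum_Ico_consecutive _ (by omega) (by omega)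
  rw [Finset.Ico_add_one_right_eq_Icc, Finset.Ico_add_one_right_eq_Icc, Finset.Ico_add_one_right_eq_Icc, gauss, gauss] at h1
  have h2 : t*(t+1)/2 ≤ d*(d+1)/2 :=
    Nat.div_le_div_right (Nat.mul_le_mul h (Nat.succ_le_succ h))
  omega

lemma sigma_split (n D : ℕ) (h : n ≤ D) :
    ((n*(n+1)/2 : ℕ) : ℤ) - (((D-n)*((D-n)+1)/2 : ℕ) : ℤ)
      = (n:ℤ)*((D:ℤ)+1) - ((D*(D+1)/2 : ℕ) : ℤ) := by
  obtain ⟨k1, hk1⟩ := Nat.even_mul_succ_self n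
  obtain ⟨k2, hk2⟩ := Nat.even_mul_succ_self (D-n)
  obtain ⟨k3, hk3⟩ := Nat.even_mul_succ_self D
  have e1 : n*(n+1)/2 = k1 := by omega
  have e2 : (D-n)*((D-n)+1)/2 = k2 := by omega
  have e3 : D*(D+1)/2 = k3 := by omega
  rw [e1, e2, e3]
  have hc : ((D-n:ℕ):ℤ) = (D:ℤ) - n := by omega
  have hk1' : (n:ℤ)*(n+1) = 2*k1 := by exact_mod_cast by omega
  have hk2' : ((D:ℤ)-n)*(((D:ℤ)-n)+1) = 2*k2 := by
    rw [← hc]; exact_mod_cast by omega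
  have hk3' : (D:ℤ)*((D:ℤ)+1) = 2*k3 := by exact_mod_cast by omega
  nlinarith [hk1', hk2', hk3']

lemma sigma_split2 (t d : ℕ) (h : t ≤ d) :
    ((d*(d+1)/2 : ℕ):ℤ) - ((t*(t+1)/2 : ℕ):ℤ) - (((d-t)*((d-t)+1)/2 : ℕ):ℤ)
      = (t:ℤ)*((d:ℤ)-t) := by
  obtain ⟨k1, hk1⟩ := Nat.even_mul_succ_self d
  obtain ⟨k2, hk2⟩ := Nat.even_mul_succ_self t
  obtain ⟨k3, hk3⟩ := Nat.even_mul_succ_self (d-t)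
  have e1 : d*(d+1)/2 = k1 := by omega
  have e2 : t*(t+1)/2 = k2 := by omega
  have e3 : (d-t)*((d-t)+1)/2 = k3 := by omega
  rw [e1, e2, e3]
  have hc : ((d-t:ℕ):ℤ) = (d:ℤ) - t := by omega
  have hk1' : (d:ℤ)*(d+1) = 2*k1 := by exact_mod_cast by omega
  have hk2' : (t:ℤ)*(t+1) = 2*k2 := by exact_mod_cast by omega
  have hk3' : ((d:ℤ)-t)*(((d:ℤ)-t)+1) = 2*k3 := by
    rw [← hc]; exact_mod_cast by omega
  nlinarith [hk1', hk2', hk3']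

lemma qint_mul_W (m : ℤ) : (v - v⁻¹) * qint m = v^m - v^(-m) := by
  rw [qint, mul_div_cancel₀ _ hvv]

lemma qfact_split (d : ℕ) : ∀ t, t ≤ d →
    qfact d = qfact (d-t) * ∏ i ∈ Finset.range t, qint ((d:ℤ)-i) := by
  intro t
  induction t with
  | zero => simp
  | succ t ih =>
    intro ht
    have h2 : qfact (d-t) = qfact (d-(t+1)) * qint ((d:ℤ)-t) := by
      rw [show d-t = (d-(t+1))+1 from by omega, qfact_succ]
      congr 1
      have hc : ((d-(t+1):ℕ):ℤ) + 1 = (d:ℤ) - t := by omega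
      rw [hc]
    rw [ih (by omega), h2, Finset.prod_range_succ]
    ring

lemma Mneg_eq (d t : ℕ) : Mneg d t = (v - v⁻¹)^t * ∏ i ∈ Finset.range t, qint ((d:ℤ)-i) := by
  rw [Mneg]
  rw [show ((v-v⁻¹)^t) = ∏ _i ∈ Finset.range t, (v-v⁻¹) from by
    rw [Finset.prod_const, Finset.card_range]]
  rw [← Finset.prod_mul_distrib]
  exact Finset.prod_congr rfl fun i _ => (qint_mul_W _).symm

lemma prod_one_add (a b : ℕ) :
    ∏ j ∈ Finset.Icc a b, (1 + v^(2*(j:ℤ)))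
      = (∏ j ∈ Finset.Icc a b, v^(j:ℤ)) * ∏ j ∈ Finset.Icc a b, (v^(j:ℤ) + v^(-(j:ℤ))) := by
  rw [← Finset.prod_mul_distrib]
  apply Finset.prod_congr rfl
  intro j _
  rw [mul_add, vmul, vmul, show (j:ℤ)+(j:ℤ) = 2*(j:ℤ) from by ring,
    show (j:ℤ)+(-(j:ℤ)) = 0 from by ring, zpow_zero]
  ring

lemma prod_vpow (a b : ℕ) :
    ∏ j ∈ Finset.Icc a b, v^(j:ℤ) = v^(((∑ j ∈ Finset.Icc a b, j : ℕ)) : ℤ) := by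
  simp only [zpow_natCast]
  rw [Finset.prod_pow_eq_pow_sum]

lemma step_t (d t : ℕ) (ht : t ≤ d) :
    ∑ k ∈ Finset.range (d+1-t), ∑ m ∈ Finset.range (d+1-t-k),
      v ^ ((t : ℤ)^2 - 2*(d:ℤ)*t + t + 2*((d-t-k-m : ℕ):ℤ)*t
          + (((d-t-k-m)*(d-t-k-m+1)/2 : ℕ):ℤ) - 2*(k:ℤ)*m - 2*(m:ℤ))
        * (v-v⁻¹)^t / (qfact (d-t-k-m) * qdfact k * qdfact m)
    = aT d t / qfact d := by
  set D := d - t with hD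
  have hb1 : d + 1 - t = D + 1 := by omega
  have hb2 : ∀ k m : ℕ, d - t - k - m = D - k - m := fun k m => by omega
  simp only [hb1, hb2]
  rw [triangle (D+1) (fun k m => v ^ ((t : ℤ)^2 - 2*(d:ℤ)*t + t + 2*((D-k-m : ℕ):ℤ)*t
          + (((D-k-m)*(D-k-m+1)/2 : ℕ):ℤ) - 2*(k:ℤ)*m - 2*(m:ℤ))
        * (v-v⁻¹)^t / (qfact (D-k-m) * qdfact k * qdfact m))]
  -- inner m-sum via lemA
  have inner : ∀ s ∈ Finset.range (D+1),
      ∑ m ∈ Finset.range (s+1), (fun k m => v ^ ((t : ℤ)^2 - 2*(d:ℤ)*t + t + 2*((D-k-m : ℕ):ℤ)*t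
          + (((D-k-m)*(D-k-m+1)/2 : ℕ):ℤ) - 2*(k:ℤ)*m - 2*(m:ℤ))
        * (v-v⁻¹)^t / (qfact (D-k-m) * qdfact k * qdfact m)) (s-m) m
      = (v ^ ((t : ℤ)^2 - 2*(d:ℤ)*t + t + 2*((D-s : ℕ):ℤ)*t
          + (((D-s)*(D-s+1)/2 : ℕ):ℤ)) * (v-v⁻¹)^t / qfact (D-s))
        * (v ^ (-((s*(s+1)/2 : ℕ) : ℤ)) / qfact s) := by
    intro s hs
    have hsD : s ≤ D := by simpa [Nat.lt_succ_iff] using hs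
    rw [← lemA s, Finset.mul_sum]
    apply Finset.sum_congr rfl
    intro m hm
    have hms : m ≤ s := by simpa [Nat.lt_succ_iff] using hm
    simp only
    have hn : D - (s-m) - m = D - s := by omega
    rw [hn, wA]
    rw [div_mul_div_comm]
    congr 1
    · rw [mul_right_comm _ ((v-v⁻¹)^t), vmul]
      congr 2
      push_cast [Nat.cast_sub hms]
      ring
    · ring
  rw [Finset.sum_congr rfl inner]
  -- reflect s ↦ D - s
  rw [← Finset.sum_range_reflect]
  simp only [Nat.add_sub_cancel]
  -- identify with lemB summands
  have hBsum : ∀ n ∈ Finset.range (D+1),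
      (v ^ ((t : ℤ)^2 - 2*(d:ℤ)*t + t + 2*((D-(D-n) : ℕ):ℤ)*t
          + (((D-(D-n))*(D-(D-n)+1)/2 : ℕ):ℤ)) * (v-v⁻¹)^t / qfact (D-(D-n)))
        * (v ^ (-(((D-n)*((D-n)+1)/2 : ℕ) : ℤ)) / qfact (D-n))
      = v ^ ((t : ℤ)^2 - 2*(d:ℤ)*t + t - ((D*(D+1)/2 : ℕ):ℤ)) * (v-v⁻¹)^t * wB D t n := by
    intro n hn
    have hnD : n ≤ D := by simpa [Nat.lt_succ_iff] using hn
    have h1 : D - (D - n) = n := by omega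
    rw [h1, wB]
    rw [div_mul_div_comm, mul_div_assoc']
    congr 1
    rw [mul_right_comm _ ((v-v⁻¹)^t), mul_right_comm _ ((v-v⁻¹)^t) (v ^ ((n:ℤ)*((D:ℤ)+2*t+1))), vmul, vmul]
    congr 2
    have hss := sigma_split n D hnD
    linear_combination hss
  rw [Finset.sum_congr rfl hBsum, ← Finset.mul_sum, lemB D t, show t + D = d from by omega]
  rw [prod_one_add, prod_vpow, gauss_split t d ht]
  rw [aT, Mneg_eq]
  have hSle : t*(t+1)/2 ≤ d*(d+1)/2 :=
    Nat.div_le_div_right (Nat.mul_le_mul ht (Nat.succ_le_succ ht))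
  have hexp : v ^ ((t : ℤ)^2 - 2*(d:ℤ)*t + t - ((D*(D+1)/2 : ℕ):ℤ))
      * v ^ (((d*(d+1)/2 - t*(t+1)/2 : ℕ)):ℤ) = v ^ (-(t:ℤ)*((d:ℤ)-1)) := by
    rw [vmul]
    congr 1
    have hss := sigma_split2 t d ht
    rw [← hD] at hss
    push_cast [Nat.cast_sub hSle]
    push_cast [Nat.cast_sub hSle] at hss
    linear_combination hss
  rw [mul_div_assoc', div_eq_div_iff (qfact_ne D) (qfact_ne d)]
  rw [qfact_split d t ht, ← hD]
  linear_combination (((v-v⁻¹)^t) * (∏ j ∈ Finset.Icc (t+1) d, (v^(j:ℤ) + v^(-(j:ℤ))))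
    * qfact D * (∏ i ∈ Finset.range t, qint ((d:ℤ)-i))) * hexp


theorem stmt5 (d : ℕ) (hd : 1 ≤ d) :
    ∑ t ∈ Finset.range (d + 1), ∑ k ∈ Finset.range (d + 1 - t),
      ∑ m ∈ Finset.range (d + 1 - t - k),
        v ^ ((t : ℤ) ^ 2 - 2 * (d : ℤ) * t + (t : ℤ)
              + 2 * ((d - t - k - m : ℕ) : ℤ) * t
              + (((d - t - k - m) * (d - t - k - m + 1) / 2 : ℕ) : ℤ)
              - 2 * (k : ℤ) * m - 2 * (m : ℤ)) *
          (v - v⁻¹) ^ t /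
          (qfact (d - t - k - m) * qdfact k * qdfact m)
    = 2 * v ^ d *
        (∏ j ∈ Finset.Icc 1 (d - 1), (v ^ (j : ℤ) + v ^ (-(j : ℤ)))) / qfact d := by
  have hmain : ∀ t ∈ Finset.range (d+1),
      (∑ k ∈ Finset.range (d + 1 - t), ∑ m ∈ Finset.range (d + 1 - t - k),
        v ^ ((t : ℤ) ^ 2 - 2 * (d : ℤ) * t + (t : ℤ)
              + 2 * ((d - t - k - m : ℕ) : ℤ) * t
              + (((d - t - k - m) * (d - t - k - m + 1) / 2 : ℕ) : ℤ)
              - 2 * (k : ℤ) * m - 2 * (m : ℤ)) *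
          (v - v⁻¹) ^ t /
          (qfact (d - t - k - m) * qdfact k * qdfact m))
      = aT d t / qfact d := by
    intro t ht
    exact step_t d t (by simpa [Nat.lt_succ_iff] using ht)
  rw [Finset.sum_congr rfl hmain, ← Finset.sum_div, lemC d hd]
  rw [← zpow_natCast v d]
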